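/- arXiv:1503.00857 — 3 statements merged into one kernel-verified Lean document; each statement's English description precedes it below -/
import Mathlib

section
/- Let E be a real normed vector space, let H, I : E → ℝ be Fréchet differentiable, let U ⊆ ℝ be an open interval, and let φ : ℝ → E be differentiable on U. Assume that for every c ∈ U the wave profile φ(c) is a critical point of H − c·I, i.e. the Fréchet derivative satisfies DH(φ(c)) = c • DI(φ(c)) as continuous linear maps E → ℝ. Define the moment of instability m : ℝ → ℝ by m(c) := H(φ(c)) − c·I(φ(c)). Then m is differentiable on U and m′(c) = −I(φ(c)) for every c ∈ U. -/
/-! Envelope principle: differentiating `H(φ(c)) - c·I(φ(c))` by the chain rule gives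
`(DH(φ c) - c • DI(φ c)) φ'(c) - I(φ c)`, and the first term vanishes because `φ(c)` is a
critical point of `H - c·I`. -/

theorem hasDerivAt_sub_mul_comp_of_eq_smul {E : Type*} [NormedAddCommGroup E]
    [NormedSpace ℝ E] {H I : E → ℝ} {H' I' : E →L[ℝ] ℝ} {φ : ℝ → E} {φ' : E} {c : ℝ}
    (hH : HasFDerivAt H H' (φ c)) (hI : HasFDerivAt I I' (φ c)) (hφ : HasDerivAt φ φ' c)
    (hcrit : H' = c • I') :
    HasDerivAt (fun x => H (φ x) - x * I (φ x)) (-I (φ c)) c := by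
  have hHφ : HasDerivAt (fun x => H (φ x)) (H' φ') c := hH.comp_hasDerivAt c hφ
  have hIφ : HasDerivAt (fun x => x * I (φ x)) (1 * I (φ c) + c * I' φ') c :=
    (hasDerivAt_id c).mul (hI.comp_hasDerivAt c hφ)
  refine (hHφ.sub hIφ).congr_deriv ?_
  simp only [hcrit, FunLike.coe_smul, Pi.smul_apply, smul_eq_mul]
  ring

/-- The moment of instability `m(c) = H(φ(c)) - c·I(φ(c))` of a family of
solitary-wave profiles `φ(c)` that are critical points of `H - c·I`
is differentiable on the open interval of speeds, with `m'(c) = -I(φ(c))`. -/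
theorem moment_of_instability_deriv
    (E : Type*) [NormedAddCommGroup E] [NormedSpace ℝ E]
    (H I : E → ℝ) (hH : Differentiable ℝ H) (hI : Differentiable ℝ I)
    (a b : ℝ) (φ : ℝ → E)
    (hφ : DifferentiableOn ℝ φ (Set.Ioo a b))
    (hcrit : ∀ c ∈ Set.Ioo a b, fderiv ℝ H (φ c) = c • fderiv ℝ I (φ c))
    (m : ℝ → ℝ) (hm : ∀ c, m c = H (φ c) - c * I (φ c)) :
    ∀ c ∈ Set.Ioo a b, HasDerivAt m (-(I (φ c))) c := by
  intro c hc
  rw [funext hm]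
  have hφc : HasDerivAt φ (deriv φ c) c :=
    (hφ.differentiableAt (isOpen_Ioo.mem_nhds hc)).hasDerivAt
  exact hasDerivAt_sub_mul_comp_of_eq_smul (hH _).hasFDerivAt (hI _).hasFDerivAt hφc
    (hcrit c hc)
end

section
/- Let E be a real normed vector space, let H, I : E → ℝ be Fréchet differentiable, let U ⊆ ℝ be an open interval, and let φ : ℝ → E be differentiable on U with DH(φ(c)) = c • DI(φ(c)) for all c ∈ U. Define m(c) := H(φ(c)) − c·I(φ(c)). If the function c ↦ I(φ(c)) is differentiable at a point c ∈ U, then m is twice differentiable at c and m″(c) = −(d/dc) I(φ(c)). In particular m″(c) = 0 if and only if (d/dc) I(φ(c)) = 0. -/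
/-! Along a family of critical points `DH(φ c) = c • DI(φ c)` the terms of `m'` involving `φ'`
cancel, so `m' = -(I ∘ φ)` on the whole interval, and differentiating once more gives `m''`. -/

open Filter Topology

theorem hasDerivAt_sub_mul_comp_of_fderiv_eq_smul {E : Type*} [NormedAddCommGroup E]
    [NormedSpace ℝ E] {H I : E → ℝ} {φ : ℝ → E} {H' I' : E →L[ℝ] ℝ} {φ' : E} {x : ℝ}
    (hH : HasFDerivAt H H' (φ x)) (hI : HasFDerivAt I I' (φ x)) (hφ : HasDerivAt φ φ' x)
    (hcrit : H' = x • I') :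
    HasDerivAt (fun y => H (φ y) - y * I (φ y)) (-I (φ x)) x := by
  refine ((hH.comp_hasDerivAt x hφ).sub
    ((hasDerivAt_id x).mul (hI.comp_hasDerivAt x hφ))).congr_deriv ?_
  simp only [hcrit, smul_apply, smul_eq_mul, Function.comp_apply, id]
  ring

/-- If additionally `c ↦ I(φ(c))` is differentiable at a speed `c` in the open
interval, then the moment of instability `m(c) = H(φ(c)) - c·I(φ(c))` is twice
differentiable at `c` with `m''(c) = -(d/dc) I(φ(c))`; in particular
`m''(c) = 0 ↔ (d/dc) I(φ(c)) = 0`. -/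
theorem moment_of_instability_second_deriv
    (E : Type*) [NormedAddCommGroup E] [NormedSpace ℝ E]
    (H I : E → ℝ) (hH : Differentiable ℝ H) (hI : Differentiable ℝ I)
    (a b : ℝ) (φ : ℝ → E)
    (hφ : DifferentiableOn ℝ φ (Set.Ioo a b))
    (hcrit : ∀ c ∈ Set.Ioo a b, fderiv ℝ H (φ c) = c • fderiv ℝ I (φ c))
    (m : ℝ → ℝ) (hm : ∀ c, m c = H (φ c) - c * I (φ c))
    (c : ℝ) (hc : c ∈ Set.Ioo a b)
    (hIφ : DifferentiableAt ℝ (fun c => I (φ c)) c) :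
    (DifferentiableAt ℝ (deriv m) c ∧
      deriv (deriv m) c = -(deriv (fun c => I (φ c)) c)) ∧
    (deriv (deriv m) c = 0 ↔ deriv (fun c => I (φ c)) c = 0) := by
  obtain rfl : m = fun x => H (φ x) - x * I (φ x) := funext hm
  have hderiv : deriv (fun x => H (φ x) - x * I (φ x)) =ᶠ[𝓝 c] fun x => -I (φ x) := by
    filter_upwards [isOpen_Ioo.mem_nhds hc] with x hx
    have hφx := (hφ.differentiableAt (isOpen_Ioo.mem_nhds hx)).hasDerivAt
    exact (hasDerivAt_sub_mul_comp_of_fderiv_eq_smul (hH _).hasFDerivAt (hI _).hasFDerivAt hφx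
      (hcrit x hx)).deriv
  have hsecond : deriv (deriv (fun x => H (φ x) - x * I (φ x))) c =
      -deriv (fun c => I (φ c)) c := by
    rw [hderiv.deriv_eq, deriv.fun_neg]
  exact ⟨⟨hIφ.neg.congr_of_eventuallyEq hderiv, hsecond⟩, by rw [hsecond, neg_eq_zero]⟩
end

section
/- Let V be a real inner product space, let L : V → V be a symmetric linear map (⟨Lx, y⟩ = ⟨x, Ly⟩ for all x, y ∈ V), let J : V → V be a skew-symmetric linear map (⟨Jx, y⟩ = −⟨x, Jy⟩ for all x, y ∈ V), and let e, f, q ∈ V satisfy L e = 0, L f = q, and J q = −e. If there exists ψ ∈ V with J(Lψ) = f (a second-order generalized eigenfunction), then ⟨q, f⟩ = 0. -/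
open RealInnerProductSpace

/-- If a second-order generalized eigenfunction `ψ` with `J L ψ = f` exists,
where `L` is symmetric, `J` is skew-symmetric, `L e = 0`, `L f = q` and
`J q = -e`, then `⟪q, f⟫ = 0`. -/
theorem generalized_eigenfunction_implies_orthogonality
    (V : Type*) [NormedAddCommGroup V] [InnerProductSpace ℝ V]
    (L J : V →ₗ[ℝ] V)
    (hL : ∀ x y : V, ⟪L x, y⟫ = ⟪x, L y⟫)
    (hJ : ∀ x y : V, ⟪J x, y⟫ = -⟪x, J y⟫)
    (e f q : V) (he : L e = 0) (hf : L f = q) (hq : J q = -e)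
    (hψ : ∃ ψ : V, J (L ψ) = f) :
    ⟪q, f⟫ = 0 := by
  obtain ⟨ψ, hψ⟩ := hψ
  have h1 : ⟪q, f⟫ = -⟪J q, L ψ⟫ := by
    rw [← hψ, hJ q (L ψ), neg_neg]
  rw [h1, hq, inner_neg_left, ← hL, he, inner_zero_left, neg_neg]
end
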